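/- arXiv:2601.00972 — 3 statements merged into one kernel-verified Lean document; each statement's English description precedes it below -/
import Mathlib

section
/- Let L ≥ 3, let p be a real number with 0 < p < 1, set n = 2L² and m = L², and let e_Z, e_X ∈ F₂^{E_L}. Then Σ_{y ∈ im ∂₂} Σ_{y' ∈ im ∂₂^*} (1−p)^{n − wt((e_Z+y) ∨ (e_X+y'))} (p/3)^{wt((e_Z+y) ∨ (e_X+y'))} = 4^{−(n−m+1)} · Σ_{c ∈ ker ∂₁^*} Σ_{c' ∈ ker ∂₁} (1 − 4p/3)^{wt(c ∨ c')} (−1)^{⟨e_Z,c⟩ + ⟨e_X,c'⟩}. (This expresses the probability under the depolarizing channel of the stabilizer coset (e_Z,e_X) + C_Z^⊥ × C_X^⊥ of the toric code as a jointly weighted sum over all pairs of a dual cycle and a primal cycle.) -/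
/-- Vertices of the `L × L` toric lattice. -/
abbrev TV (L : ℕ) := ZMod L × ZMod L

/-- Edge indices of the toric lattice: `((i,j), 0)` joins `(i,j)` and `(i+1,j)`;
`((i,j), 1)` joins `(i,j)` and `(i,j+1)`. -/
abbrev TE (L : ℕ) := (ZMod L × ZMod L) × Fin 2

/-- Plaquette indices of the toric lattice. -/
abbrev TP (L : ℕ) := ZMod L × ZMod L

/-- First endpoint of an edge. -/
def tEp1 {L : ℕ} (e : TE L) : TV L := e.1

/-- Second endpoint of an edge. -/
def tEp2 {L : ℕ} (e : TE L) : TV L :=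
  if e.2 = 0 then (e.1.1 + 1, e.1.2) else (e.1.1, e.1.2 + 1)

/-- Vertex–edge incidence matrix over `F₂`. -/
def tM1 (L : ℕ) : Matrix (TV L) (TE L) (ZMod 2) := fun v e =>
  if v = tEp1 e ∨ v = tEp2 e then 1 else 0

/-- Edge–plaquette incidence matrix over `F₂`: the plaquette `(i,j)` has the four
boundary edges `((i,j),0)`, `((i,j),1)`, `((i,j+1),0)`, `((i+1,j),1)`. -/
def tM2 (L : ℕ) : Matrix (TE L) (TP L) (ZMod 2) := fun e q =>
  if e = ((q.1, q.2), (0 : Fin 2)) ∨ e = ((q.1, q.2), (1 : Fin 2)) ∨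
      e = ((q.1, q.2 + 1), (0 : Fin 2)) ∨ e = ((q.1 + 1, q.2), (1 : Fin 2))
  then 1 else 0

/-- The boundary map `∂₁ : F₂^{E_L} → F₂^{V_L}`, sending the indicator of an edge to
the sum of the indicators of its two endpoints. -/
def tD1 (L : ℕ) [NeZero L] : (TE L → ZMod 2) →ₗ[ZMod 2] (TV L → ZMod 2) :=
  (tM1 L).mulVecLin

/-- The boundary map `∂₂ : F₂^{P_L} → F₂^{E_L}`, sending the indicator of a plaquette to
the sum of the indicators of its four boundary edges. -/
def tD2 (L : ℕ) [NeZero L] : (TP L → ZMod 2) →ₗ[ZMod 2] (TE L → ZMod 2) :=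
  (tM2 L).mulVecLin

/-- The transpose `∂₁^* : F₂^{E_L} → F₂^{P_L}` of `∂₂`. -/
def tD1s (L : ℕ) [NeZero L] : (TE L → ZMod 2) →ₗ[ZMod 2] (TP L → ZMod 2) :=
  (Matrix.transpose (tM2 L)).mulVecLin

/-- The transpose `∂₂^* : F₂^{V_L} → F₂^{E_L}` of `∂₁`. -/
def tD2s (L : ℕ) [NeZero L] : (TV L → ZMod 2) →ₗ[ZMod 2] (TE L → ZMod 2) :=
  (Matrix.transpose (tM1 L)).mulVecLin

/-- Hamming weight of an `F₂`-vector. -/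
def wt {α : Type*} [Fintype α] (x : α → ZMod 2) : ℕ :=
  (Finset.univ.filter fun a => x a ≠ 0).card

/-- Indicator vector of a finite set of coordinates. -/
def ind {α : Type*} [Fintype α] [DecidableEq α] (D : Finset α) : α → ZMod 2 :=
  fun a => if a ∈ D then 1 else 0

/-- Coordinatewise OR of two `F₂`-vectors (coordinatewise maximum, viewing
coordinates in `{0,1}`). -/
def orv {α : Type*} (x x' : α → ZMod 2) : α → ZMod 2 :=
  fun a => if x a = 0 ∧ x' a = 0 then 0 else 1

/-!
At a single qubit, `∑_{(c,c') ∈ F₂²} (1 - 4p/3)^[(c,c') ≠ 0] (-1)^(x c + x' c')` equals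
`4 (1 - p)` if `x = x' = 0` and `4 p / 3` otherwise; taking the product over the `n` qubits,
`4ⁿ` times the depolarizing probability of `(x, x')` is the sum over all `(c, c')` of
`(1 - 4p/3)^wt(c ∨ c') (-1)^(⟨x,c⟩ + ⟨x',c'⟩)`. Summing this over `x = e_Z + ∂₂ u`,
`x' = e_X + ∂₂^* v` for all `u, v`, character orthogonality keeps only `c ∈ ker ∂₁^*`,
`c' ∈ ker ∂₁`, each with weight `2ᵐ · 2ᵐ`. Every element of the coset is hit
`|ker ∂₂| · |ker ∂₂^*| = 4` times, both kernels consisting of the constant functions on the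
(connected) torus.
-/

open Finset Matrix

def chi (z : ZMod 2) : ℝ := if z = 0 then 1 else -1

lemma ZMod.two_eq_zero_or_eq_one (a : ZMod 2) : a = 0 ∨ a = 1 := by
  revert a; decide

lemma ZMod.sum_univ_two {M : Type*} [AddCommMonoid M] (f : ZMod 2 → M) :
    ∑ b, f b = f 0 + f 1 :=
  Fin.sum_univ_two f

lemma chi_add (a b : ZMod 2) : chi (a + b) = chi a * chi b := by
  rcases a.two_eq_zero_or_eq_one with rfl | rfl <;>
    rcases b.two_eq_zero_or_eq_one with rfl | rfl <;> simp +decide [chi]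

lemma chi_sum {ι : Type*} (s : Finset ι) (f : ι → ZMod 2) :
    chi (∑ i ∈ s, f i) = ∏ i ∈ s, chi (f i) := by
  induction s using Finset.cons_induction with
  | empty => simp [chi]
  | cons a s ha ih => rw [sum_cons, prod_cons, chi_add, ih]

section Orthogonality

variable {β : Type*} [Fintype β] [DecidableEq β]

lemma sum_chi_dotProduct (w : β → ZMod 2) :
    ∑ u : β → ZMod 2, chi (u ⬝ᵥ w) = if w = 0 then 2 ^ Fintype.card β else 0 := by
  simp only [dotProduct, chi_sum]
  rw [← Fintype.prod_sum fun a (b : ZMod 2) => chi (b * w a)]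
  have coord : ∀ z : ZMod 2, ∑ b : ZMod 2, chi (b * z) = if z = 0 then 2 else 0 := by
    intro z
    rcases z.two_eq_zero_or_eq_one with rfl | rfl <;>
      simp +decide [ZMod.sum_univ_two, chi]
  simp only [coord]
  split_ifs with hw
  · simp [hw]
  · obtain ⟨a, ha⟩ := Function.ne_iff.mp hw
    exact prod_eq_zero (mem_univ a) (if_neg ha)

lemma sum_chi_add_mulVec_dotProduct {E : Type*} [Fintype E] (A : Matrix E β (ZMod 2))
    (x c : E → ZMod 2) :
    ∑ u : β → ZMod 2, chi ((x + A *ᵥ u) ⬝ᵥ c) =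
      if Aᵀ *ᵥ c = 0 then 2 ^ Fintype.card β * chi (x ⬝ᵥ c) else 0 := by
  have split : ∀ u, (x + A *ᵥ u) ⬝ᵥ c = x ⬝ᵥ c + u ⬝ᵥ (Aᵀ *ᵥ c) := fun u => by
    rw [add_dotProduct, dotProduct_comm (A *ᵥ u), dotProduct_mulVec, mulVec_transpose,
      dotProduct_comm (c ᵥ* A)]
  simp only [split, chi_add, ← mul_sum, sum_chi_dotProduct, mul_ite, mul_zero, mul_comm]

end Orthogonality

section Depolarizing

variable {α : Type*} [Fintype α]

lemma prod_ite_orv (x x' : α → ZMod 2) (r s : ℝ) :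
    ∏ a, (if x a = 0 ∧ x' a = 0 then r else s) =
      r ^ (Fintype.card α - wt (orv x x')) * s ^ wt (orv x x') := by
  have hwt : wt (orv x x') = #{a | ¬(x a = 0 ∧ x' a = 0)} := by
    unfold wt orv
    congr 1
    exact filter_congr fun a _ => by split_ifs <;> simp_all
  rw [prod_ite, prod_const, prod_const, hwt, ← card_univ (α := α),
    ← card_filter_add_card_filter_not (s := univ) fun a => x a = 0 ∧ x' a = 0,
    Nat.add_sub_cancel]

lemma sum_depolarizing_coord (p : ℝ) (z z' : ZMod 2) :
    ∑ w : ZMod 2 × ZMod 2, (if w.1 = 0 ∧ w.2 = 0 then 1 else 1 - 4 * p / 3) *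
        chi (z * w.1 + z' * w.2) =
      4 * (if z = 0 ∧ z' = 0 then 1 - p else p / 3) := by
  rcases z.two_eq_zero_or_eq_one with rfl | rfl <;>
    rcases z'.two_eq_zero_or_eq_one with rfl | rfl <;>
    simp +decide [Fintype.sum_prod_type, ZMod.sum_univ_two, chi] <;> ring

theorem sum_pow_wt_orv_mul_chi [DecidableEq α] (p : ℝ) (x x' : α → ZMod 2) :
    ∑ c : α → ZMod 2, ∑ c' : α → ZMod 2,
        (1 - 4 * p / 3) ^ wt (orv c c') * chi (x ⬝ᵥ c + x' ⬝ᵥ c') =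
      4 ^ Fintype.card α *
        ((1 - p) ^ (Fintype.card α - wt (orv x x')) * (p / 3) ^ wt (orv x x')) := by
  have factor : ∀ c c' : α → ZMod 2,
      (1 - 4 * p / 3) ^ wt (orv c c') * chi (x ⬝ᵥ c + x' ⬝ᵥ c') =
        ∏ a, (if c a = 0 ∧ c' a = 0 then 1 else 1 - 4 * p / 3) *
          chi (x a * c a + x' a * c' a) := fun c c' => by
    rw [prod_mul_distrib, prod_ite_orv, one_pow, one_mul, dotProduct, dotProduct,
      ← sum_add_distrib, chi_sum]
  simp only [factor]
  rw [← Fintype.sum_prod_type',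
    ← (Equiv.arrowProdEquivProdArrow α (fun _ => ZMod 2) (fun _ => ZMod 2)).sum_comp]
  simp only [Equiv.arrowProdEquivProdArrow_apply]
  rw [← Fintype.prod_sum fun a (w : ZMod 2 × ZMod 2) =>
      (if w.1 = 0 ∧ w.2 = 0 then 1 else 1 - 4 * p / 3) * chi (x a * w.1 + x' a * w.2)]
  simp only [sum_depolarizing_coord, prod_mul_distrib, prod_const, card_univ, prod_ite_orv]

end Depolarizing

theorem sum_coset_fourier_eq_sum_ker {E P V : Type*} [Fintype E] [DecidableEq E] [Fintype P]
    [DecidableEq P] [Fintype V] [DecidableEq V] (A : Matrix E P (ZMod 2))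
    (B : Matrix E V (ZMod 2)) (T : (E → ZMod 2) → (E → ZMod 2) → ℝ) (x x' : E → ZMod 2) :
    ∑ u : P → ZMod 2, ∑ v : V → ZMod 2, ∑ c : E → ZMod 2, ∑ c' : E → ZMod 2,
        T c c' * chi ((x + A *ᵥ u) ⬝ᵥ c + (x' + B *ᵥ v) ⬝ᵥ c') =
      2 ^ Fintype.card P * 2 ^ Fintype.card V *
        ∑ c ∈ univ.filter (fun c => Aᵀ *ᵥ c = 0), ∑ c' ∈ univ.filter (fun c' => Bᵀ *ᵥ c' = 0),
          T c c' * chi (x ⬝ᵥ c + x' ⬝ᵥ c') := by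
  have factor : ∀ c c', ∑ u : P → ZMod 2, ∑ v : V → ZMod 2,
      T c c' * chi ((x + A *ᵥ u) ⬝ᵥ c + (x' + B *ᵥ v) ⬝ᵥ c') =
        T c c' * ((∑ u : P → ZMod 2, chi ((x + A *ᵥ u) ⬝ᵥ c)) *
          ∑ v : V → ZMod 2, chi ((x' + B *ᵥ v) ⬝ᵥ c')) := fun c c' => by
    rw [sum_mul_sum]
    simp only [mul_sum, chi_add]
  calc _ = ∑ c : E → ZMod 2, ∑ c' : E → ZMod 2, ∑ u : P → ZMod 2, ∑ v : V → ZMod 2,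
          T c c' * chi ((x + A *ᵥ u) ⬝ᵥ c + (x' + B *ᵥ v) ⬝ᵥ c') :=
        (sum_congr rfl fun _ _ => sum_comm.trans (sum_congr rfl fun _ _ => sum_comm)).trans
          (sum_comm.trans (sum_congr rfl fun _ _ => sum_comm))
    _ = _ := by
      simp only [factor, sum_chi_add_mulVec_dotProduct, sum_filter, mul_sum]
      refine sum_congr rfl fun c _ => ?_
      by_cases hc : Aᵀ *ᵥ c = 0
      · rw [if_pos hc, if_pos hc, mul_sum]
        refine sum_congr rfl fun c' _ => ?_
        split_ifs <;> simp only [chi_add, mul_zero]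
        ring
      · rw [if_neg hc, if_neg hc]
        simp

lemma sum_comp_eq_card_ker_smul_sum_range {G H F M : Type*} [AddGroup G] [Fintype G]
    [AddGroup H] [Fintype H] [DecidableEq H] [FunLike F G H] [AddMonoidHomClass F G H]
    [AddCommMonoid M] (f : F) (h : H → M) :
    ∑ g, h (f g) = #{g | f g = 0} • ∑ y ∈ univ.filter (fun y => ∃ g, f g = y), h y := by
  rw [← sum_fiberwise_of_maps_to (g := f) (t := univ.filter (fun y => ∃ g, f g = y))
    (fun g _ => by simp), smul_sum]
  refine sum_congr rfl fun y hy => ?_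
  obtain ⟨g₀, rfl⟩ := (mem_filter.mp hy).2
  rw [sum_congr rfl fun g hg => congrArg h (mem_filter.mp hg).2, sum_const,
    AddMonoidHom.card_fiber_eq_of_mem_range f ⟨g₀, rfl⟩ ⟨0, map_zero f⟩]

lemma sum_sum_comp_eq_card_ker_mul {G G' H H' F F' M : Type*} [AddGroup G] [Fintype G]
    [AddGroup G'] [Fintype G'] [AddGroup H] [Fintype H] [DecidableEq H] [AddGroup H']
    [Fintype H'] [DecidableEq H'] [FunLike F G H] [AddMonoidHomClass F G H] [FunLike F' G' H']
    [AddMonoidHomClass F' G' H'] [AddCommMonoid M] (f : F) (f' : F') (h : H → H' → M) :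
    ∑ g, ∑ g', h (f g) (f' g') = (#{g | f g = 0} * #{g' | f' g' = 0}) •
      ∑ y ∈ univ.filter (fun y => ∃ g, f g = y), ∑ y' ∈ univ.filter (fun y' => ∃ g', f' g' = y'),
        h y y' := by
  rw [sum_comp_eq_card_ker_smul_sum_range f fun y => ∑ g', h y (f' g'),
    sum_congr rfl fun y _ => sum_comp_eq_card_ker_smul_sum_range f' (h y), ← smul_sum,
    smul_smul]

lemma card_filter_exists_eq_const {β : Type*} [Fintype β] [DecidableEq β] [Nonempty β] :
    #{c : β → ZMod 2 | ∃ z, c = fun _ => z} = 2 := by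
  rw [show univ.filter (fun c : β → ZMod 2 => ∃ z, c = fun _ => z) =
      univ.image (Function.const β) from by
      ext c
      simp only [mem_filter, mem_univ, true_and, mem_image]
      exact exists_congr fun _ => eq_comm,
    card_image_of_injective _ Function.const_injective, card_univ, ZMod.card]

lemma sum_ite_or_mul {ι R : Type*} [Fintype ι] [DecidableEq ι] [NonAssocSemiring R]
    {a b : ι} (hab : a ≠ b) (c : ι → R) :
    ∑ q, (if q = a ∨ q = b then 1 else 0) * c q = c a + c b := by
  simp only [ite_mul, one_mul, zero_mul]
  rw [← sum_pair hab, ← sum_filter]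
  congr 1
  ext q
  simp

lemma ZMod.apply_eq_apply_zero_of_add_one {L : ℕ} [NeZero L] {X : Type*} (f : ZMod L → X)
    (h : ∀ i, f (i + 1) = f i) (i : ZMod L) : f i = f 0 := by
  obtain ⟨k, rfl⟩ := ZMod.natCast_zmod_surjective i
  induction k with
  | zero => simp
  | succ k ih => rw [Nat.cast_succ, h, ih]

lemma eq_const_of_translation_invariant {L : ℕ} [NeZero L] {X : Type*}
    (f : ZMod L × ZMod L → X) (h₁ : ∀ i j, f (i + 1, j) = f (i, j))
    (h₂ : ∀ i j, f (i, j + 1) = f (i, j)) :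
    f = fun _ => f (0, 0) := by
  funext ⟨i, j⟩
  rw [ZMod.apply_eq_apply_zero_of_add_one (fun i => f (i, j)) (fun i => h₁ i j),
    ZMod.apply_eq_apply_zero_of_add_one (fun j => f (0, j)) (fun j => h₂ 0 j)]

section Toric

variable {L : ℕ} [NeZero L] [Fact (1 < L)]

lemma tD2_apply_horizontal (c : TP L → ZMod 2) (i j : ZMod L) :
    tD2 L c ((i, j), 0) = c (i, j) + c (i, j - 1) := by
  have row : ∀ q : TP L,
      tM2 L ((i, j), 0) q = if q = (i, j) ∨ q = (i, j - 1) then 1 else 0 := by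
    intro q
    simp only [tM2, Prod.ext_iff, eq_sub_iff_add_eq]
    grind
  simp only [tD2, mulVecLin_apply, mulVec, dotProduct, row]
  exact sum_ite_or_mul (by simp [Prod.ext_iff, eq_sub_iff_add_eq]) c

lemma tD2_apply_vertical (c : TP L → ZMod 2) (i j : ZMod L) :
    tD2 L c ((i, j), 1) = c (i, j) + c (i - 1, j) := by
  have row : ∀ q : TP L,
      tM2 L ((i, j), 1) q = if q = (i, j) ∨ q = (i - 1, j) then 1 else 0 := by
    intro q
    simp only [tM2, Prod.ext_iff, eq_sub_iff_add_eq]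
    grind
  simp only [tD2, mulVecLin_apply, mulVec, dotProduct, row]
  exact sum_ite_or_mul (by simp [Prod.ext_iff, eq_sub_iff_add_eq]) c

lemma tD2s_apply (x : TV L → ZMod 2) (e : TE L) :
    tD2s L x e = x (tEp1 e) + x (tEp2 e) := by
  refine sum_ite_or_mul ?_ x
  rcases e with ⟨⟨i, j⟩, d⟩
  fin_cases d <;> simp [tEp1, tEp2, Prod.ext_iff]

lemma tD2_eq_zero_iff (c : TP L → ZMod 2) : tD2 L c = 0 ↔ ∃ z, c = fun _ => z := by
  constructor
  · intro hc
    refine ⟨_, eq_const_of_translation_invariant c (fun i j => ?_) (fun i j => ?_)⟩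
    · have := congrFun hc ((i + 1, j), 1)
      rwa [Pi.zero_apply, tD2_apply_vertical, add_sub_cancel_right, CharTwo.add_eq_zero] at this
    · have := congrFun hc ((i, j + 1), 0)
      rwa [Pi.zero_apply, tD2_apply_horizontal, add_sub_cancel_right,
        CharTwo.add_eq_zero] at this
  · rintro ⟨z, rfl⟩
    funext ⟨⟨i, j⟩, d⟩
    fin_cases d
    · exact (tD2_apply_horizontal _ i j).trans (CharTwo.add_self_eq_zero z)
    · exact (tD2_apply_vertical _ i j).trans (CharTwo.add_self_eq_zero z)

lemma tD2s_eq_zero_iff (x : TV L → ZMod 2) : tD2s L x = 0 ↔ ∃ z, x = fun _ => z := by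
  constructor
  · intro hx
    refine ⟨_, eq_const_of_translation_invariant x (fun i j => ?_) (fun i j => ?_)⟩
    · have := congrFun hx ((i, j), 0)
      rw [Pi.zero_apply, tD2s_apply, CharTwo.add_eq_zero] at this
      exact this.symm
    · have := congrFun hx ((i, j), 1)
      rw [Pi.zero_apply, tD2s_apply, CharTwo.add_eq_zero] at this
      exact this.symm
  · rintro ⟨z, rfl⟩
    funext e
    exact (tD2s_apply _ e).trans (CharTwo.add_self_eq_zero z)

lemma card_ker_tD2 : #{c : TP L → ZMod 2 | tD2 L c = 0} = 2 := by
  simp_rw [tD2_eq_zero_iff]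
  exact card_filter_exists_eq_const

lemma card_ker_tD2s : #{x : TV L → ZMod 2 | tD2s L x = 0} = 2 := by
  simp_rw [tD2s_eq_zero_iff]
  exact card_filter_exists_eq_const

end Toric

theorem toric_coset_probability_depolarizing_dual_expansion_general
    (L n m : ℕ) [NeZero L] (hL : 3 ≤ L)
    (hn : n = 2 * L ^ 2) (hm : m = L ^ 2)
    (p : ℝ)
    (eZ eX : TE L → ZMod 2) :
    ∑ y ∈ Finset.univ.filter (fun y : TE L → ZMod 2 => ∃ c, tD2 L c = y),
      ∑ y' ∈ Finset.univ.filter (fun y' : TE L → ZMod 2 => ∃ x, tD2s L x = y'),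
        (1 - p) ^ (n - wt (orv (eZ + y) (eX + y'))) *
          (p / 3) ^ wt (orv (eZ + y) (eX + y'))
    = (4 : ℝ) ^ (-((n : ℤ) - (m : ℤ) + 1)) *
        ∑ c ∈ Finset.univ.filter (fun c : TE L → ZMod 2 => tD1s L c = 0),
          ∑ c' ∈ Finset.univ.filter (fun c' : TE L → ZMod 2 => tD1 L c' = 0),
            (1 - 4 * p / 3) ^ wt (orv c c') *
              (if (∑ a, eZ a * c a) + (∑ a, eX a * c' a) = (0 : ZMod 2)
               then (1 : ℝ) else -1) := by
  subst hn hm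
  have : Fact (1 < L) := ⟨by omega⟩
  set F : (TE L → ZMod 2) → (TE L → ZMod 2) → ℝ := fun x x' =>
    (1 - p) ^ (2 * L ^ 2 - wt (orv x x')) * (p / 3) ^ wt (orv x x')
  have fourier : ∀ x x', (4 : ℝ) ^ (2 * L ^ 2) * F x x' =
      ∑ c, ∑ c', (1 - 4 * p / 3) ^ wt (orv c c') * chi (x ⬝ᵥ c + x' ⬝ᵥ c') := fun x x' => by
    rw [sum_pow_wt_orv_mul_chi, show Fintype.card (TE L) = 2 * L ^ 2 by simp; ring]
  have cosets := sum_sum_comp_eq_card_ker_mul (tD2 L) (tD2s L) fun y y' => F (eZ + y) (eX + y')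
  rw [card_ker_tD2, card_ker_tD2s] at cosets
  have poisson := sum_coset_fourier_eq_sum_ker (tM2 L) (tM1 L)ᵀ
    (fun c c' => (1 - 4 * p / 3) ^ wt (orv c c')) eZ eX
  simp only [← fourier, ← mul_sum, show Fintype.card (TP L) = L ^ 2 by simp; ring] at poisson
  rw [show ∑ u, ∑ v, F (eZ + tM2 L *ᵥ u) (eX + (tM1 L)ᵀ *ᵥ v) = _ from cosets,
    nsmul_eq_mul] at poisson
  rw [show -(((2 * L ^ 2 : ℕ) : ℤ) - ((L ^ 2 : ℕ) : ℤ) + 1) = -((L ^ 2 + 1 : ℕ) : ℤ) by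
      push_cast; ring,
    _root_.zpow_neg, zpow_natCast, eq_inv_mul_iff_mul_eq₀ (by positivity)]
  refine mul_left_cancel₀ (pow_ne_zero (L ^ 2) (four_ne_zero' ℝ)) ?_
  -- the two kernel sums agree up to unfolding `tD1s`, `tD1` and `chi`
  convert poisson using 1
  · push_cast
    ring
  · rw [← mul_pow]
    congr 1
    norm_num

/-- **Kramers–Wannier–MacWilliams duality for the toric code under depolarizing
noise.**  With `n = 2L²` qubits and `m = L²` plaquettes, the probability of the
stabilizer coset `(e_Z, e_X) + C_Z^⊥ × C_X^⊥ = (e_Z + im ∂₂) × (e_X + im ∂₂^*)` under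
the depolarizing channel with parameter `p` equals
`4^{−(n−m+1)} Σ_{c ∈ ker ∂₁^*} Σ_{c' ∈ ker ∂₁} (1−4p/3)^{wt(c ∨ c')}
(−1)^{⟨e_Z,c⟩+⟨e_X,c'⟩}`, a jointly weighted sum over all pairs of a dual cycle and a
primal cycle. -/
theorem toric_coset_probability_depolarizing_dual_expansion
    (L n m : ℕ) [NeZero L] (hL : 3 ≤ L)
    (hn : n = 2 * L ^ 2) (hm : m = L ^ 2)
    (p : ℝ) (hp0 : 0 < p) (hp1 : p < 1)
    (eZ eX : TE L → ZMod 2) :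
    ∑ y ∈ Finset.univ.filter (fun y : TE L → ZMod 2 => ∃ c, tD2 L c = y),
      ∑ y' ∈ Finset.univ.filter (fun y' : TE L → ZMod 2 => ∃ x, tD2s L x = y'),
        (1 - p) ^ (n - wt (orv (eZ + y) (eX + y'))) *
          (p / 3) ^ wt (orv (eZ + y) (eX + y'))
    = (4 : ℝ) ^ (-((n : ℤ) - (m : ℤ) + 1)) *
        ∑ c ∈ Finset.univ.filter (fun c : TE L → ZMod 2 => tD1s L c = 0),
          ∑ c' ∈ Finset.univ.filter (fun c' : TE L → ZMod 2 => tD1 L c' = 0),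
            (1 - 4 * p / 3) ^ wt (orv c c') *
              (if (∑ a, eZ a * c a) + (∑ a, eX a * c' a) = (0 : ZMod 2)
               then (1 : ℝ) else -1) :=
  toric_coset_probability_depolarizing_dual_expansion_general L n m hL hn hm p eZ eX
end

section
/- For L ≥ 3, the image of ∂₂ is contained in the kernel of ∂₁ for the toric lattice, and the quotient F₂-vector space (ker ∂₁)/(im ∂₂) has dimension 2. (This is the statement that the toric code encodes k = 2 logical qubits, i.e., that the first homology of the torus over F₂ is 2-dimensional.) -/
set_option linter.unusedSectionVars false

section helpers
variable {α : Type*} [Fintype α] [DecidableEq α]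

private lemma sum_ind2 (f g : α → ZMod 2) (a b : α) (hab : a ≠ b)
    (h : ∀ q, f q = if q = a ∨ q = b then 1 else 0) :
    ∑ q, f q * g q = g a + g b := by
  have key : ∀ q, f q * g q = (if q = a then g q else 0) + (if q = b then g q else 0) := by
    intro q
    rw [h q]
    by_cases h1 : q = a <;> by_cases h2 : q = b <;> simp_all
  rw [Finset.sum_congr rfl (fun q _ => key q), Finset.sum_add_distrib]
  simp [Finset.sum_ite_eq']

private lemma sum_ind4 (f g : α → ZMod 2) (a b c d : α)
    (hab : a ≠ b) (hac : a ≠ c) (had : a ≠ d) (hbc : b ≠ c) (hbd : b ≠ d) (hcd : c ≠ d)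
    (h : ∀ q, f q = if q = a ∨ q = b ∨ q = c ∨ q = d then 1 else 0) :
    ∑ q, f q * g q = g a + g b + g c + g d := by
  have key : ∀ q, f q * g q = (if q = a then g q else 0) + (if q = b then g q else 0)
      + (if q = c then g q else 0) + (if q = d then g q else 0) := by
    intro q
    rw [h q]
    by_cases h1 : q = a <;> by_cases h2 : q = b <;> by_cases h3 : q = c <;>
      by_cases h4 : q = d <;> simp_all
  rw [Finset.sum_congr rfl (fun q _ => key q), Finset.sum_add_distrib,
    Finset.sum_add_distrib, Finset.sum_add_distrib]
  simp [Finset.sum_ite_eq']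

private lemma z2_eq_of_add {a b : ZMod 2} (h : a + b = 0) : a = b := by
  revert h; revert a b; decide

end helpers

section main
variable {L : ℕ} [NeZero L]

private lemma tM2_row0 (i j : ZMod L) (q : TP L) :
    tM2 L ((i, j + 1), (0 : Fin 2)) q = if q = (i, j + 1) ∨ q = (i, j) then 1 else 0 := by
  obtain ⟨q1, q2⟩ := q
  simp only [tM2]
  apply if_congr _ rfl rfl
  constructor
  · rintro (h | h | h | h) <;> simp_all [Prod.ext_iff]
  · rintro (h | h) <;> simp_all [Prod.ext_iff]

private lemma tM2_row1 (i j : ZMod L) (q : TP L) :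
    tM2 L ((i + 1, j), (1 : Fin 2)) q = if q = (i + 1, j) ∨ q = (i, j) then 1 else 0 := by
  obtain ⟨q1, q2⟩ := q
  simp only [tM2]
  apply if_congr _ rfl rfl
  constructor
  · rintro (h | h | h | h) <;> simp_all [Prod.ext_iff]
  · rintro (h | h) <;> simp_all [Prod.ext_iff]

/-- constancy from row/column invariance -/
private lemma const_of (x : TV L → ZMod 2)
    (h1 : ∀ i j : ZMod L, x (i + 1, j) = x (i, j))
    (h2 : ∀ i j : ZMod L, x (i, j + 1) = x (i, j)) :
    ∀ p, x p = x (0, 0) := by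
  have hrow : ∀ (n : ℕ) (j : ZMod L), x ((n : ZMod L), j) = x (0, j) := by
    intro n
    induction n with
    | zero => simp
    | succ n ih =>
        intro j
        have hc : ((n + 1 : ℕ) : ZMod L) = (n : ZMod L) + 1 := by push_cast; ring
        rw [hc, h1, ih]
  have hcol : ∀ (n : ℕ), x (0, (n : ZMod L)) = x (0, 0) := by
    intro n
    induction n with
    | zero => simp
    | succ n ih =>
        have hc : ((n + 1 : ℕ) : ZMod L) = (n : ZMod L) + 1 := by push_cast; ring
        rw [hc, h2, ih]
  rintro ⟨i, j⟩
  calc x (i, j) = x (((i.val : ℕ) : ZMod L), j) := by rw [ZMod.natCast_rightInverse i]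
    _ = x (0, j) := hrow _ _
    _ = x (0, ((j.val : ℕ) : ZMod L)) := by rw [ZMod.natCast_rightInverse j]
    _ = x (0, 0) := hcol _

variable (hL10 : (1 : ZMod L) ≠ 0)
include hL10

private lemma tEp_ne (e : TE L) : tEp1 e ≠ tEp2 e := by
  obtain ⟨⟨i, j⟩, ε⟩ := e
  fin_cases ε <;> simp [tEp1, tEp2, Prod.ext_iff, left_eq_add, hL10]

/-- kernel of ∂₂ is the constants -/
private lemma ker_tD2 :
    LinearMap.ker (tD2 L) = Submodule.span (ZMod 2) {(fun _ => 1 : TP L → ZMod 2)} := by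
  apply le_antisymm
  · intro x hx
    have hx' : ∀ e : TE L, ∑ q, tM2 L e q * x q = 0 :=
      fun e => congrFun (LinearMap.mem_ker.mp hx) e
    have h2 : ∀ i j : ZMod L, x (i, j + 1) = x (i, j) := by
      intro i j
      apply z2_eq_of_add
      rw [← sum_ind2 (tM2 L ((i, j + 1), (0 : Fin 2))) x (i, j + 1) (i, j)
        (by simp [Prod.ext_iff, left_eq_add, hL10]) (tM2_row0 i j)]
      exact hx' _
    have h1 : ∀ i j : ZMod L, x (i + 1, j) = x (i, j) := by
      intro i j
      apply z2_eq_of_add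
      rw [← sum_ind2 (tM2 L ((i + 1, j), (1 : Fin 2))) x (i + 1, j) (i, j)
        (by simp [Prod.ext_iff, left_eq_add, hL10]) (tM2_row1 i j)]
      exact hx' _
    exact Submodule.mem_span_singleton.mpr ⟨x (0, 0), funext fun p => by
      simp [const_of x h1 h2 p, Pi.smul_apply]⟩
  · rw [Submodule.span_le, Set.singleton_subset_iff, SetLike.mem_coe, LinearMap.mem_ker]
    funext e
    obtain ⟨⟨i, j⟩, ε⟩ := e
    obtain ⟨εv, hεv⟩ := ε
    have hj : j - 1 + 1 = j := by ring
    have hi : i - 1 + 1 = i := by ring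
    interval_cases εv
    · show ∑ q, tM2 L ((i, j), (0 : Fin 2)) q * 1 = 0
      have h := tM2_row0 i (j - 1)
      rw [hj] at h
      rw [sum_ind2 _ _ (i, j) (i, j - 1)
        (by simp [Prod.ext_iff]; intro h'; exact hL10 (by linear_combination h')) h]
      decide
    · show ∑ q, tM2 L ((i, j), (1 : Fin 2)) q * 1 = 0
      have h := tM2_row1 (i - 1) j
      rw [hi] at h
      rw [sum_ind2 _ _ (i, j) (i - 1, j)
        (by simp [Prod.ext_iff]; intro h'; exact hL10 (by linear_combination h')) h]
      decide

/-- kernel of ∂₂* (the transpose of ∂₁) is the constants -/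
private lemma ker_tD2s :
    LinearMap.ker (tD2s L) = Submodule.span (ZMod 2) {(fun _ => 1 : TV L → ZMod 2)} := by
  have hrow : ∀ (e : TE L) (v : TV L),
      (tM1 L).transpose e v = if v = tEp1 e ∨ v = tEp2 e then 1 else 0 := fun _ _ => rfl
  apply le_antisymm
  · intro x hx
    have hx0 : ∀ e : TE L, ∑ v, (tM1 L).transpose e v * x v = 0 :=
      fun e => congrFun (LinearMap.mem_ker.mp hx) e
    have hx' : ∀ e : TE L, x (tEp1 e) + x (tEp2 e) = 0 := by
      intro e
      rw [← sum_ind2 ((tM1 L).transpose e) x (tEp1 e) (tEp2 e) (tEp_ne hL10 e) (hrow e)]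
      exact hx0 e
    have h1 : ∀ i j : ZMod L, x (i + 1, j) = x (i, j) := fun i j =>
      (z2_eq_of_add (hx' ((i, j), 0))).symm
    have h2 : ∀ i j : ZMod L, x (i, j + 1) = x (i, j) := fun i j =>
      (z2_eq_of_add (hx' ((i, j), 1))).symm
    exact Submodule.mem_span_singleton.mpr ⟨x (0, 0), funext fun p => by
      simp [const_of x h1 h2 p, Pi.smul_apply]⟩
  · rw [Submodule.span_le, Set.singleton_subset_iff, SetLike.mem_coe, LinearMap.mem_ker]
    funext e
    show ∑ v, (tM1 L).transpose e v * 1 = 0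
    rw [sum_ind2 _ _ (tEp1 e) (tEp2 e) (tEp_ne hL10 e) (hrow e)]
    decide

/-- ∂₁ ∘ ∂₂ = 0 as matrices -/
private lemma mul_tM1_tM2 : tM1 L * tM2 L = 0 := by
  ext v q
  obtain ⟨q1, q2⟩ := q
  obtain ⟨v1, v2⟩ := v
  rw [Matrix.mul_apply]
  rw [Finset.sum_congr rfl fun e _ =>
    mul_comm (tM1 L (v1, v2) e) (tM2 L e (q1, q2))]
  rw [sum_ind4 (fun e => tM2 L e (q1, q2)) (tM1 L (v1, v2))
      ((q1, q2), (0 : Fin 2)) ((q1, q2), (1 : Fin 2))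
      ((q1, q2 + 1), (0 : Fin 2)) ((q1 + 1, q2), (1 : Fin 2))
      (by simp [Prod.ext_iff]) (by simp [Prod.ext_iff, left_eq_add, hL10])
      (by simp [Prod.ext_iff]) (by simp [Prod.ext_iff])
      (by simp [Prod.ext_iff, left_eq_add, hL10]) (by simp [Prod.ext_iff])
      (fun e => rfl)]
  have e1 : ¬ (q1 = q1 + 1) := by simp [left_eq_add, hL10]
  have e2 : ¬ (q2 = q2 + 1) := by simp [left_eq_add, hL10]
  have e1' : ¬ (q1 + 1 = q1) := fun h => e1 h.symm
  have e2' : ¬ (q2 + 1 = q2) := fun h => e2 h.symm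
  simp only [tM1, tEp1, tEp2, Matrix.zero_apply]
  norm_num
  by_cases hA : v1 = q1 <;> by_cases hB : v1 = q1 + 1 <;>
    by_cases hC : v2 = q2 <;> by_cases hD : v2 = q2 + 1 <;>
    simp_all [Prod.ext_iff] <;> decide

omit hL10

private lemma one_ne_zero_zmodL (hL : 3 ≤ L) : (1 : ZMod L) ≠ 0 := by
  intro h
  have := (ZMod.natCast_eq_zero_iff 1 L).mp (by exact_mod_cast h)
  have := Nat.le_of_dvd one_pos this
  omega

end main

/-- **The toric code encodes two logical qubits.**
For `L ≥ 3`, `im ∂₂ ⊆ ker ∂₁`, and the quotient `F₂`-vector space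
`(ker ∂₁)/(im ∂₂)` — the first homology of the torus over `F₂` — has dimension `2`. -/
theorem toric_first_homology_rank_two
    (L : ℕ) [NeZero L] (hL : 3 ≤ L) :
    LinearMap.range (tD2 L) ≤ LinearMap.ker (tD1 L) ∧
    Module.finrank (ZMod 2)
      (↥(LinearMap.ker (tD1 L)) ⧸
        Submodule.comap (LinearMap.ker (tD1 L)).subtype (LinearMap.range (tD2 L))) = 2 := by
  have hL10 : (1 : ZMod L) ≠ 0 := one_ne_zero_zmodL hL
  -- range ⊆ ker
  have hsub : LinearMap.range (tD2 L) ≤ LinearMap.ker (tD1 L) := by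
    rintro y ⟨x, rfl⟩
    rw [LinearMap.mem_ker]
    show (tM1 L).mulVecLin ((tM2 L).mulVecLin x) = 0
    rw [← LinearMap.comp_apply, ← Matrix.mulVecLin_mul, mul_tM1_tM2 hL10]
    simp
  refine ⟨hsub, ?_⟩
  -- dimension counting
  have hone2 : (fun _ => 1 : TP L → ZMod 2) ≠ 0 := by
    intro h
    exact one_ne_zero (congrFun h (0, 0))
  have hone2s : (fun _ => 1 : TV L → ZMod 2) ≠ 0 := by
    intro h
    exact one_ne_zero (congrFun h (0, 0))
  have hkd2 : Module.finrank (ZMod 2) (LinearMap.ker (tD2 L)) = 1 := by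
    rw [ker_tD2 hL10]
    exact finrank_span_singleton hone2
  have hkd2s : Module.finrank (ZMod 2) (LinearMap.ker (tD2s L)) = 1 := by
    rw [ker_tD2s hL10]
    exact finrank_span_singleton hone2s
  -- cardinalities
  have cV : Fintype.card (TV L) = L * L := by simp [ZMod.card]
  have cE : Fintype.card (TE L) = L * L * 2 := by simp [ZMod.card]
  have fV : Module.finrank (ZMod 2) (TV L → ZMod 2) = L * L := by
    rw [Module.finrank_pi, cV]
  have fE : Module.finrank (ZMod 2) (TE L → ZMod 2) = L * L * 2 := by
    rw [Module.finrank_pi, cE]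
  have fP : Module.finrank (ZMod 2) (TP L → ZMod 2) = L * L := by
    rw [Module.finrank_pi, cV]
  -- rank-nullity for ∂₂ : rank(tM2) + 1 = L*L
  have rn2 : Module.finrank (ZMod 2) (LinearMap.range (tD2 L))
      + Module.finrank (ZMod 2) (LinearMap.ker (tD2 L))
      = L * L := by
    rw [← fP]; exact LinearMap.finrank_range_add_finrank_ker (tD2 L)
  -- rank-nullity for ∂₂* : rank(tM1ᵀ) + 1 = L*L
  have rn2s : Module.finrank (ZMod 2) (LinearMap.range (tD2s L))
      + Module.finrank (ZMod 2) (LinearMap.ker (tD2s L))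
      = L * L := by
    rw [← fV]; exact LinearMap.finrank_range_add_finrank_ker (tD2s L)
  -- rank tM1 = rank tM1ᵀ
  have hrk : Module.finrank (ZMod 2) (LinearMap.range (tD1 L))
      = Module.finrank (ZMod 2) (LinearMap.range (tD2s L)) := by
    show (tM1 L).rank = (tM1 L).transpose.rank
    rw [Matrix.rank_transpose]
  -- rank-nullity for ∂₁
  have rn1 : Module.finrank (ZMod 2) (LinearMap.range (tD1 L))
      + Module.finrank (ZMod 2) (LinearMap.ker (tD1 L))
      = L * L * 2 := by
    rw [← fE]; exact LinearMap.finrank_range_add_finrank_ker (tD1 L)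
  -- the quotient
  set p := Submodule.comap (LinearMap.ker (tD1 L)).subtype (LinearMap.range (tD2 L)) with hp
  have hq : Module.finrank (ZMod 2)
        ((↥(LinearMap.ker (tD1 L))) ⧸ p)
      + Module.finrank (ZMod 2) p
      = Module.finrank (ZMod 2) (LinearMap.ker (tD1 L)) :=
    Submodule.finrank_quotient_add_finrank p
  have hpe : Module.finrank (ZMod 2) p
      = Module.finrank (ZMod 2) (LinearMap.range (tD2 L)) :=
    LinearEquiv.finrank_eq (Submodule.comapSubtypeEquivOfLe hsub)
  have hLL : 1 ≤ L * L := Nat.one_le_iff_ne_zero.mpr (by positivity)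
  omega
end

section
/- For L ≥ 3, the image of ∂₂ is contained in the kernel of the relative boundary map ∂₁ for the planar surface code lattice, and the quotient F₂-vector space (ker ∂₁)/(im ∂₂) has dimension 1. (This is the statement that the planar surface code encodes k = 1 logical qubit, i.e., that the first relative homology of the lattice modulo its left and right boundaries over F₂ is 1-dimensional.) -/
/-- Edge indices of the planar surface code lattice: `Sum.inl (r, c)` is the horizontal
edge joining `(r, c)` and `(r, c+1)` (for `0 ≤ r ≤ L-1`, `0 ≤ c ≤ L-1`); `Sum.inr (r, k)`
is the vertical edge joining `(r, k+1)` and `(r+1, k+1)` (for `0 ≤ r ≤ L-2`,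
`1 ≤ k+1 ≤ L-1`).  In total there are `L² + (L-1)² = 2L² - 2L + 1` edges. -/
abbrev SE (L : ℕ) := (Fin L × Fin L) ⊕ (Fin (L - 1) × Fin (L - 1))

/-- Plaquette indices: plaquette `(r, c)` (for `0 ≤ r ≤ L-2`, `0 ≤ c ≤ L-1`) is the unit
cell with corners `(r,c), (r,c+1), (r+1,c), (r+1,c+1)`. -/
abbrev SP (L : ℕ) := Fin (L - 1) × Fin L

/-- Interior (non-boundary) vertices `V ∖ B`: the pair `(r, k)` stands for the vertex
`(r, k+1)`, i.e. the vertices in columns `1, …, L-1`. -/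
abbrev SV (L : ℕ) := Fin L × Fin (L - 1)

/-- Edge–plaquette incidence matrix over `F₂`: the boundary of a plaquette consists of
its (at most four) sides that belong to the edge set. -/
def sM2 (L : ℕ) : Matrix (SE L) (SP L) (ZMod 2) := fun e q =>
  match e with
  | Sum.inl rc =>
      if (rc.1.val = q.1.val ∨ rc.1.val = q.1.val + 1) ∧ rc.2.val = q.2.val then 1 else 0
  | Sum.inr rk =>
      if rk.1.val = q.1.val ∧ (rk.2.val = q.2.val ∨ rk.2.val + 1 = q.2.val) then 1 else 0

/-- Interior-vertex–edge incidence matrix over `F₂` (a vertex of `B` contributes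
nothing: this is the relative incidence). -/
def sM1 (L : ℕ) : Matrix (SV L) (SE L) (ZMod 2) := fun v e =>
  match e with
  | Sum.inl rc =>
      if rc.1.val = v.1.val ∧ (rc.2.val = v.2.val ∨ rc.2.val = v.2.val + 1) then 1 else 0
  | Sum.inr rk =>
      if rk.2.val = v.2.val ∧ (rk.1.val = v.1.val ∨ rk.1.val + 1 = v.1.val) then 1 else 0

/-- The boundary map `∂₂ : F₂^{P} → F₂^{E}`, sending the indicator of a plaquette to the
sum of the indicators of its boundary edges in `E`. -/
def sD2 (L : ℕ) : (SP L → ZMod 2) →ₗ[ZMod 2] (SE L → ZMod 2) := (sM2 L).mulVecLin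

/-- The relative boundary map `∂₁ : F₂^{E} → F₂^{V∖B}`, sending the indicator of an edge
to the sum of the indicators of its endpoints lying outside `B`. -/
def sD1 (L : ℕ) : (SE L → ZMod 2) →ₗ[ZMod 2] (SV L → ZMod 2) := (sM1 L).mulVecLin

/-- The transpose `∂₁^* : F₂^{E} → F₂^{P}` of `∂₂`. -/
def sD1s (L : ℕ) : (SE L → ZMod 2) →ₗ[ZMod 2] (SP L → ZMod 2) :=
  (Matrix.transpose (sM2 L)).mulVecLin

/-- The transpose `∂₂^* : F₂^{V∖B} → F₂^{E}` of `∂₁`. -/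
def sD2s (L : ℕ) : (SV L → ZMod 2) →ₗ[ZMod 2] (SE L → ZMod 2) :=
  (Matrix.transpose (sM1 L)).mulVecLin

lemma sum_eq_pair' {α : Type*} [Fintype α] [DecidableEq α] (f : α → ZMod 2) (a b : α)
    (hab : a ≠ b) (h : ∀ x, x ≠ a → x ≠ b → f x = 0) : ∑ x, f x = f a + f b := by
  rw [← Finset.sum_pair hab]
  refine (Finset.sum_subset (Finset.subset_univ _) ?_).symm
  intro x _ hx
  simp only [Finset.mem_insert, Finset.mem_singleton, not_or] at hx
  exact h x hx.1 hx.2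

lemma comp_zero (L : ℕ) : sM1 L * sM2 L = 0 := by
  ext v q
  rw [Matrix.mul_apply, Fintype.sum_sum_type]
  set C : Prop := (v.1.val = q.1.val ∨ v.1.val = q.1.val + 1) ∧
      (q.2.val = v.2.val ∨ q.2.val = v.2.val + 1) with hC
  have hH : (∑ rc : Fin L × Fin L, sM1 L v (Sum.inl rc) * sM2 L (Sum.inl rc) q)
      = if C then 1 else 0 := by
    have key : ∀ rc : Fin L × Fin L, sM1 L v (Sum.inl rc) * sM2 L (Sum.inl rc) q
        = if rc = (v.1, q.2) then (if C then (1:ZMod 2) else 0) else 0 := by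
      intro rc
      simp only [sM1, sM2, hC, Prod.ext_iff, Fin.ext_iff]
      split_ifs <;> (try rfl) <;> (exfalso; omega)
    simp_rw [key]
    rw [Finset.sum_ite_eq']
    simp
  have hV : (∑ rk : Fin (L-1) × Fin (L-1), sM1 L v (Sum.inr rk) * sM2 L (Sum.inr rk) q)
      = if C then 1 else 0 := by
    have key : ∀ rk : Fin (L-1) × Fin (L-1), sM1 L v (Sum.inr rk) * sM2 L (Sum.inr rk) q
        = if rk = (q.1, v.2) then (if C then (1:ZMod 2) else 0) else 0 := by
      intro rk
      simp only [sM1, sM2, hC, Prod.ext_iff, Fin.ext_iff]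
      split_ifs <;> (try rfl) <;> (exfalso; omega)
    simp_rw [key]
    rw [Finset.sum_ite_eq']
    simp
  rw [hH, hV, Matrix.zero_apply]
  split_ifs <;> decide

lemma d2_inj (L : ℕ) (hL : 3 ≤ L) : Function.Injective (sD2 L) := by
  rw [← LinearMap.ker_eq_bot, Submodule.eq_bot_iff]
  intro x hx
  rw [LinearMap.mem_ker] at hx
  have hx' : ∀ e, ∑ q : SP L, sM2 L e q * x q = 0 := by
    intro e
    have := congrFun hx e
    simpa [sD2, Matrix.mulVecLin_apply, Matrix.mulVec, dotProduct] using this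
  have main : ∀ n, ∀ q : SP L, q.1.val = n → x q = 0 := by
    intro n
    induction n using Nat.strong_induction_on with
    | _ n ih =>
      rintro ⟨r, c⟩ hr
      replace hr : r.val = n := hr
      have hrL : r.val < L := by omega
      have he := hx' (Sum.inl (⟨r.val, hrL⟩, c))
      rcases Nat.eq_zero_or_pos n with h0 | hpos
      · -- only plaquette (r,c) touches this edge
        have key : ∀ p : SP L, sM2 L (Sum.inl (⟨r.val, hrL⟩, c)) p * x p
            = if p = (r, c) then x p else 0 := by
          intro p
          simp only [sM2, Prod.ext_iff, Fin.ext_iff, Fin.val_mk]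
          split_ifs <;> (try ring) <;> (exfalso; omega)
        rw [Finset.sum_congr rfl (fun p _ => key p), Finset.sum_ite_eq'] at he
        simpa using he
      · have hn1 : n - 1 < L - 1 := by omega
        have hne : ((r, c) : SP L) ≠ (⟨n-1, hn1⟩, c) := by
          simp only [ne_eq, Prod.mk.injEq, Fin.ext_iff, Fin.val_mk, not_and]
          intro h; omega
        rw [sum_eq_pair' _ (r, c) (⟨n-1, hn1⟩, c) hne] at he
        · have h1 : sM2 L (Sum.inl (⟨r.val, hrL⟩, c)) (r, c) = 1 := by
            show (if ((⟨r.val, hrL⟩ : Fin L).val = r.val ∨ _) ∧ c.val = c.val then (1:ZMod 2) else 0) = 1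
            rw [if_pos ⟨Or.inl rfl, rfl⟩]
          have h2 : sM2 L (Sum.inl (⟨r.val, hrL⟩, c)) (⟨n-1, hn1⟩, c) = 1 := by
            show (if ((⟨r.val, hrL⟩ : Fin L).val = (⟨n-1, hn1⟩ : Fin (L-1)).val ∨ (⟨r.val, hrL⟩ : Fin L).val = (⟨n-1, hn1⟩ : Fin (L-1)).val + 1) ∧ c.val = c.val then (1:ZMod 2) else 0) = 1
            rw [if_pos ⟨Or.inr (by simp only [Fin.val_mk]; omega), rfl⟩]
          rw [h1, h2, one_mul, one_mul, ih (n-1) (by omega) (⟨n-1, hn1⟩, c) rfl, add_zero] at he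
          exact he
        · rintro ⟨a, b⟩ ha hb
          simp only [ne_eq, Prod.mk.injEq, Fin.ext_iff, Fin.val_mk, not_and] at ha hb
          simp only [sM2, Fin.val_mk]
          split_ifs with h
          · exfalso
            rcases h with ⟨h1 | h1, h2⟩ <;> omega
          · ring
  funext q
  exact main q.1.val q rfl

lemma d1_surj (L : ℕ) (hL : 3 ≤ L) : Function.Surjective (sD1 L) := by
  intro g
  classical
  refine ⟨fun e => match e with
    | Sum.inl rc => ∑ j : Fin (L-1), if j.val < rc.2.val then g (rc.1, j) else 0
    | Sum.inr _ => 0, ?_⟩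
  funext v
  obtain ⟨r, k⟩ := v
  have hk1 : k.val < L := by omega
  have hk2 : k.val + 1 < L := by omega
  show ∑ e : SE L, sM1 L (r, k) e * _ = g (r, k)
  rw [Fintype.sum_sum_type]
  have hR : ∀ rk : Fin (L-1) × Fin (L-1),
      sM1 L (r,k) (Sum.inr rk) * (0:ZMod 2) = 0 := fun _ => mul_zero _
  simp_rw [hR, Finset.sum_const_zero, add_zero]
  rw [sum_eq_pair' _ (r, (⟨k.val, hk1⟩ : Fin L)) (r, (⟨k.val+1, hk2⟩ : Fin L))
      (by simp only [ne_eq, Prod.mk.injEq, Fin.ext_iff, Fin.val_mk, not_and]; intro _; omega)]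
  · have c1 : sM1 L (r,k) (Sum.inl (r, ⟨k.val, hk1⟩)) = 1 := by
      show (if r.val = r.val ∧ ((⟨k.val, hk1⟩ : Fin L).val = k.val ∨ _) then (1:ZMod 2) else 0) = 1
      rw [if_pos ⟨rfl, Or.inl rfl⟩]
    have c2 : sM1 L (r,k) (Sum.inl (r, ⟨k.val+1, hk2⟩)) = 1 := by
      show (if r.val = r.val ∧ ((⟨k.val+1, hk2⟩ : Fin L).val = k.val ∨ (⟨k.val+1, hk2⟩ : Fin L).val = k.val + 1) then (1:ZMod 2) else 0) = 1
      rw [if_pos ⟨rfl, Or.inr rfl⟩]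
    rw [c1, c2, one_mul, one_mul]
    have htwo : ∀ t : ZMod 2, t + t = 0 := by decide
    rw [← Finset.sum_add_distrib]
    have key : ∀ j : Fin (L-1),
        ((if j.val < (⟨k.val, hk1⟩ : Fin L).val then g (r, j) else 0)
          + (if j.val < (⟨k.val+1, hk2⟩ : Fin L).val then g (r, j) else 0))
        = if j = k then g (r, j) else 0 := by
      intro j
      simp only [Fin.val_mk]
      rcases lt_trichotomy j.val k.val with h | h | h
      · rw [if_pos h, if_pos (by omega), if_neg (by simp only [Fin.ext_iff]; omega), htwo]
      · rw [if_neg (by omega), if_pos (by omega), if_pos (Fin.ext h), zero_add]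
      · rw [if_neg (by omega), if_neg (by omega), if_neg (by simp only [Fin.ext_iff]; omega), zero_add]
    calc (∑ j : Fin (L-1), ((if j.val < (⟨k.val, hk1⟩ : Fin L).val then g (r, j) else 0)
          + (if j.val < (⟨k.val+1, hk2⟩ : Fin L).val then g (r, j) else 0)))
        = ∑ j : Fin (L-1), if j = k then g (r, j) else 0 :=
          Finset.sum_congr rfl (fun j _ => key j)
      _ = g (r, k) := by rw [Finset.sum_ite_eq']; simp
  · rintro ⟨a, b⟩ ha hb
    simp only [ne_eq, Prod.mk.injEq, Fin.ext_iff, Fin.val_mk, not_and] at ha hb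
    simp only [sM1]
    split_ifs with h
    · exfalso
      rcases h with ⟨h1, h2 | h2⟩ <;> omega
    · ring

set_option synthInstance.maxHeartbeats 1000000 in
set_option maxHeartbeats 1000000 in
/-- **The planar surface code encodes one logical qubit.**
For `L ≥ 3`, `im ∂₂ ⊆ ker ∂₁` for the planar surface code lattice, and the quotient
`F₂`-vector space `(ker ∂₁)/(im ∂₂)` — the first relative homology of the lattice
modulo its left and right boundaries over `F₂` — has dimension `1`. -/
theorem planar_first_relative_homology_rank_one
    (L : ℕ) (hL : 3 ≤ L) :
    LinearMap.range (sD2 L) ≤ LinearMap.ker (sD1 L) ∧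
    Module.finrank (ZMod 2)
      (↥(LinearMap.ker (sD1 L)) ⧸
        Submodule.comap (LinearMap.ker (sD1 L)).subtype (LinearMap.range (sD2 L))) = 1 := by
  have hcomp : sD1 L ∘ₗ sD2 L = 0 := by
    rw [sD1, sD2, ← Matrix.mulVecLin_mul, comp_zero]
    simp
  have hle : LinearMap.range (sD2 L) ≤ LinearMap.ker (sD1 L) := by
    rintro _ ⟨y, rfl⟩
    rw [LinearMap.mem_ker, ← LinearMap.comp_apply, hcomp, LinearMap.zero_apply]
  refine ⟨hle, ?_⟩
  have hN : Module.finrank (ZMod 2)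
      ↥(Submodule.comap (LinearMap.ker (sD1 L)).subtype (LinearMap.range (sD2 L)))
      = (L-1) * L := by
    rw [(Submodule.comapSubtypeEquivOfLe hle).finrank_eq,
      LinearMap.finrank_range_of_inj (d2_inj L hL),
      Module.finrank_fintype_fun_eq_card]
    simp [Fintype.card_prod]
  have hker : Module.finrank (ZMod 2) ↥(LinearMap.ker (sD1 L))
      = L * L + (L-1)*(L-1) - L * (L-1) := by
    have h1 := LinearMap.finrank_range_add_finrank_ker (sD1 L)
    rw [LinearMap.range_eq_top.mpr (d1_surj L hL), finrank_top,
      Module.finrank_fintype_fun_eq_card, Module.finrank_fintype_fun_eq_card] at h1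
    simp only [Fintype.card_sum, Fintype.card_prod, Fintype.card_fin] at h1
    omega
  have hq := Submodule.finrank_quotient_add_finrank
    (Submodule.comap (LinearMap.ker (sD1 L)).subtype (LinearMap.range (sD2 L)))
  rw [hN, hker] at hq
  obtain ⟨m, rfl⟩ : ∃ m, L = m + 3 := ⟨L - 3, by omega⟩
  have hm : m + 3 - 1 = m + 2 := by omega
  rw [hm] at hq
  have e1 : (m+2) * (m+3) = m*m + 5*m + 6 := by ring
  have e2 : (m+3) * (m+3) = m*m + 6*m + 9 := by ring
  have e3 : (m+2) * (m+2) = m*m + 4*m + 4 := by ring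
  have e4 : (m+3) * (m+2) = m*m + 5*m + 6 := by ring
  rw [e1, e2, e3, e4] at hq
  generalize m * m = s at hq
  omega
end
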